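/- Let A × B → ℚ/ℤ be a perfect pairing of abelian topological groups, and p a prime. Then the induced pairing A(p) × (B/B_{p-div}) → ℚ/ℤ, where A(p) is the p-primary torsion subgroup of A and B_{p-div} = ⋂_m p^m B, is non-degenerate on the left. -/
import Mathlib


/- STATEMENT 0: Let A × B → ℚ/ℤ be a perfect pairing of abelian topological groups and p a
prime.  Then the induced pairing A(p) × (B/B_{p-div}) → ℚ/ℤ, where A(p) is the p-primary
torsion subgroup of A and B_{p-div} = ⋂_m p^m B, is non-degenerate on the left. -/

/-- ℚ/ℤ. -/
abbrev QZ := AddCircle (1 : ℚ)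

/-- A pairing is perfect if both induced maps to the Hom-groups are isomorphisms. -/
def IsPerfectPairing {A B : Type*} [AddCommGroup A] [AddCommGroup B]
    (p : A →+ B →+ QZ) : Prop :=
  Function.Bijective (fun a : A => p a) ∧ Function.Bijective (fun b : B => p.flip b)

/-- The `p`-primary torsion subgroup `A(p)` of an abelian group `A`. -/
def primaryComponent (A : Type*) [AddCommGroup A] (p : ℕ) : AddSubgroup A where
  carrier := {a | ∃ m : ℕ, (p ^ m) • a = 0}
  zero_mem' := ⟨0, smul_zero _⟩
  add_mem' := by
    rintro a b ⟨m, hm⟩ ⟨n, hn⟩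
    refine ⟨m + n, ?_⟩
    have h1 : (p ^ (m + n)) • a = 0 := by
      rw [pow_add, mul_comm, mul_smul, hm, smul_zero]
    have h2 : (p ^ (m + n)) • b = 0 := by
      rw [pow_add, mul_smul, hn, smul_zero]
    rw [smul_add, h1, h2, add_zero]
  neg_mem' := by
    rintro a ⟨m, hm⟩
    exact ⟨m, by rw [smul_neg, hm, neg_zero]⟩

/-- The subgroup `nB` of an abelian group `B`. -/
def smulRange (n : ℕ) (B : Type*) [AddCommGroup B] : AddSubgroup B where
  carrier := {b | ∃ c : B, n • c = b}
  zero_mem' := ⟨0, smul_zero _⟩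
  add_mem' := by
    rintro a b ⟨c, hc⟩ ⟨d, hd⟩
    exact ⟨c + d, by rw [smul_add, hc, hd]⟩
  neg_mem' := by
    rintro a ⟨c, hc⟩
    exact ⟨-c, by rw [smul_neg, hc]⟩

/-- The subgroup `B_{p-div} = ⋂_m p^m B` of `p`-divisible elements. -/
def pDiv (B : Type*) [AddCommGroup B] (p : ℕ) : AddSubgroup B :=
  ⨅ m : ℕ, smulRange (p ^ m) B

theorem perfect_pairing_induces_left_nondegenerate
    {A B : Type*} [AddCommGroup A] [AddCommGroup B]
    (p : ℕ) (hp : p.Prime)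
    (pair : A →+ B →+ QZ) (hperf : IsPerfectPairing pair)
    -- `q` is the induced pairing `A(p) × (B/B_{p-div}) → ℚ/ℤ`
    (q : ↥(primaryComponent A p) →+ (B ⧸ pDiv B p) →+ QZ)
    (hq : ∀ (a : ↥(primaryComponent A p)) (b : B),
      q a (QuotientAddGroup.mk b) = pair (a : A) b) :
    Function.Injective (fun a : ↥(primaryComponent A p) => q a) := by
  intro a a' h
  have hb : ∀ b : B, pair (a : A) b = pair (a' : A) b := fun b => by
    rw [← hq a b, ← hq a' b, show q a = q a' from h]
  have : (a : A) = (a' : A) := hperf.1.injective (AddMonoidHom.ext hb)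
  exact Subtype.ext this
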